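/- For each n ≥ 1, the derivative with respect to x of {}_{2F_1}A_n(a,b;c;x), when viewed through the shifted-parameter family, satisfies: d/dx {}_{2F_1}A_n(a,b;c;x) = n·(ab/c) · {}_{2F_1}A_{n-1}(a+1,b+1;c+1;x). -/

import Mathlib

noncomputable section

/-- Pochhammer symbol (rising factorial). -/
def poch (r : ℝ) : ℕ → ℝ
  | 0 => 1
  | k + 1 => poch r k * (r + k)

/-- Gauss-Appell polynomials. -/
def GA (A : ℕ → ℝ) (a b c x : ℝ) (n : ℕ) : ℝ :=
  ∑ k ∈ Finset.range (n + 1),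
    (n.choose k : ℝ) * x ^ k * poch a k * poch b k / poch c k * A (n - k)

lemma poch_succ' (r : ℝ) (k : ℕ) : poch r (k + 1) = r * poch (r + 1) k := by
  induction k with
  | zero => simp [poch]
  | succ k ih =>
    show poch r (k + 1) * (r + ↑(k + 1)) = r * (poch (r + 1) k * (r + 1 + k))
    rw [ih]
    push_cast
    ring

theorem stmt5 (A : ℕ → ℝ) (a b c : ℝ) (n : ℕ) (hn : 1 ≤ n)
    (hcne : c ≠ 0) (hc : ∀ k, poch c k ≠ 0) (hc1 : ∀ k, poch (c + 1) k ≠ 0) (x : ℝ) :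
    deriv (fun y => GA A a b c y n) x =
      (n : ℝ) * (a * b / c) * GA A (a + 1) (b + 1) (c + 1) x (n - 1) := by
  obtain ⟨m, rfl⟩ : ∃ m, n = m + 1 := ⟨n - 1, (Nat.succ_pred_eq_of_pos hn).symm⟩
  unfold GA
  have hdiff : ∀ k ∈ Finset.range (m + 1 + 1), DifferentiableAt ℝ
      (fun y : ℝ => ((m + 1).choose k : ℝ) * y ^ k * poch a k * poch b k / poch c k
        * A (m + 1 - k)) x := by
    intro k _
    exact ((((differentiableAt_pow k).const_mul _).mul_const _).mul_const _).div_const _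
      |>.mul_const _
  rw [deriv_fun_sum hdiff]
  have hterm : ∀ k, deriv (fun y : ℝ => ((m + 1).choose k : ℝ) * y ^ k * poch a k
      * poch b k / poch c k * A (m + 1 - k)) x
      = (((m + 1).choose k : ℝ) * poch a k * poch b k / poch c k * A (m + 1 - k))
        * (k * x ^ (k - 1)) := by
    intro k
    have h1 : (fun y : ℝ => ((m + 1).choose k : ℝ) * y ^ k * poch a k
        * poch b k / poch c k * A (m + 1 - k))
        = fun y : ℝ => (((m + 1).choose k : ℝ) * poch a k * poch b k / poch c k
          * A (m + 1 - k)) * y ^ k := by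
      funext y; ring
    rw [h1, deriv_const_mul _ (differentiableAt_pow k), deriv_pow_field]
  simp only [hterm]
  rw [Finset.sum_range_succ']
  simp only [Nat.cast_zero, zero_mul, mul_zero, add_zero, Nat.succ_sub_one, Finset.mul_sum]
  refine Finset.sum_congr rfl fun k _ => ?_
  have hch : (((m + 1).choose (k + 1)) : ℝ) * ((k : ℝ) + 1) = ((m + 1 : ℕ) : ℝ) * (m.choose k : ℝ) := by
    have h := (Nat.add_one_mul_choose_eq m k).symm
    have : ((m + 1).choose (k + 1)) * (k + 1) = (m + 1) * m.choose k := by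
      rw [h, Nat.mul_comm]
    exact_mod_cast congrArg (fun t : ℕ => (t : ℝ)) this
  have hsub : m + 1 - (k + 1) = m - k := by omega
  rw [hsub, poch_succ' a, poch_succ' b, poch_succ' c]
  push_cast at hch ⊢
  have h1 := hc1 k
  field_simp
  linear_combination (a * poch (a + 1) k * b * poch (b + 1) k * A (m - k) * x ^ k) * hch
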